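/- arXiv:2204.04269 — 4 statements merged into one kernel-verified Lean document; each statement's English description precedes it below -/
import Mathlib

section
/- Let G be a graph with e(G) = k edges (k even, k ≥ 2) that contains a vertex x of degree k/2 and has matching number β(G) ≥ k/2. Then every vertex v of G satisfies deg(v) ≤ 3 or deg(v) = k/2. -/
/-! Take a maximum matching `M`. At most one edge at `x` lies in `M`, so at least `k/2 - 1` of the
`k - |M| ≤ k/2` edges outside `M` meet `x`, leaving at most one edge outside `M` that avoids `x`.
An edge at a vertex `v ≠ x` is either its (at most one) edge in `M`, the edge `vx`, or that
single remaining edge, so `deg v ≤ 3`. -/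

open SimpleGraph

/-- The matching number of a graph: the largest size (number of edges) of a matching. -/
noncomputable def matchingNumber {V : Type*} (G : SimpleGraph V) : ℕ :=
  sSup {m | ∃ M : G.Subgraph, M.IsMatching ∧ M.edgeSet.ncard = m}

open Finset

theorem exists_isMatching_ncard_eq_matchingNumber {V : Type*} [Finite V] (G : SimpleGraph V) :
    ∃ M : G.Subgraph, M.IsMatching ∧ M.edgeSet.ncard = matchingNumber G := by
  refine Nat.sSup_mem (s := {m | ∃ M : G.Subgraph, M.IsMatching ∧ M.edgeSet.ncard = m})
    ⟨0, ⊥, fun _ h => h.elim, by simp⟩ ⟨G.edgeSet.ncard, ?_⟩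
  rintro _ ⟨M, -, rfl⟩
  exact Set.ncard_le_ncard M.edgeSet_subset

theorem SimpleGraph.Subgraph.IsMatching.card_filter_mem_le_one {V : Type*} [DecidableEq V]
    {G : SimpleGraph V} {M : G.Subgraph} (hM : M.IsMatching) {F : Finset (Sym2 V)}
    (hF : ↑F ⊆ M.edgeSet) (u : V) : #{e ∈ F | u ∈ e} ≤ 1 := by
  rw [card_le_one]
  simp only [mem_filter, and_imp]
  rintro e he hue e' he' hue'
  obtain ⟨w, rfl⟩ := Sym2.mem_iff_exists.mp hue
  obtain ⟨w', rfl⟩ := Sym2.mem_iff_exists.mp hue'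
  rw [hM.eq_of_adj_left (Subgraph.mem_edgeSet.mp (hF he)) (Subgraph.mem_edgeSet.mp (hF he'))]

section EdgeCounting

variable {V : Type*} [DecidableEq V] {E F : Finset (Sym2 V)}

theorem card_filter_notMem_sdiff_add_le (hFE : F ⊆ E) (hF : ∀ u, #{e ∈ F | u ∈ e} ≤ 1)
    (x : V) : #{e ∈ E \ F | x ∉ e} + #{e ∈ E | x ∈ e} + #F ≤ #E + 1 := by
  have hsplit := card_filter_add_card_filter_not (s := E \ F) (x ∈ ·)
  have hsdiff := card_sdiff_add_card_eq_card hFE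
  have hx : #{e ∈ E | x ∈ e} ≤ #{e ∈ E \ F | x ∈ e} + #{e ∈ F | x ∈ e} :=
    calc #{e ∈ E | x ∈ e} = #({e ∈ E \ F | x ∈ e} ∪ {e ∈ F | x ∈ e}) := by
          rw [← filter_union, sdiff_union_of_subset hFE]
      _ ≤ _ := card_union_le _ _
  have hFx := hF x
  omega

theorem card_filter_mem_le_of_ne {v x : V} (hvx : v ≠ x) :
    #{e ∈ E | v ∈ e} ≤ #{e ∈ F | v ∈ e} + #{e ∈ E \ F | x ∉ e} + 1 := by
  have hcover : {e ∈ E | v ∈ e} ⊆ {e ∈ F | v ∈ e} ∪ {e ∈ E \ F | x ∉ e} ∪ {s(v, x)} := by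
    intro e
    simp only [mem_filter, mem_union, mem_sdiff, mem_singleton]
    rintro ⟨he, hve⟩
    by_cases heF : e ∈ F
    · exact .inl (.inl ⟨heF, hve⟩)
    by_cases hxe : x ∈ e
    · exact .inr ((Sym2.mem_and_mem_iff hvx).mp ⟨hve, hxe⟩)
    · exact .inl (.inr ⟨⟨he, heF⟩, hxe⟩)
  calc #{e ∈ E | v ∈ e}
      ≤ #({e ∈ F | v ∈ e} ∪ {e ∈ E \ F | x ∉ e} ∪ {s(v, x)}) := card_le_card hcover
    _ ≤ #({e ∈ F | v ∈ e} ∪ {e ∈ E \ F | x ∉ e}) + 1 := card_union_le _ _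
    _ ≤ _ := by grw [card_union_le]

end EdgeCounting

theorem SimpleGraph.Subgraph.IsMatching.degree_add_degree_add_ncard_le {V : Type*} [Fintype V]
    [DecidableEq V] {G : SimpleGraph V} [DecidableRel G.Adj] {M : G.Subgraph} (hM : M.IsMatching)
    {v x : V} (hvx : v ≠ x) : G.degree v + G.degree x + M.edgeSet.ncard ≤ #G.edgeFinset + 3 := by
  set F := M.edgeSet.toFinite.toFinset
  have hF : ↑F ⊆ M.edgeSet := by simp [F]
  have hFE : F ⊆ G.edgeFinset := by
    simpa [F, ← coe_subset] using M.edgeSet_subset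
  have hdeg (u : V) : G.degree u = #{e ∈ G.edgeFinset | u ∈ e} := by
    rw [← card_incidenceFinset_eq_degree, incidenceFinset_eq_filter]
  have hrest := card_filter_notMem_sdiff_add_le hFE (hM.card_filter_mem_le_one hF) x
  have hv := card_filter_mem_le_of_ne (E := G.edgeFinset) (F := F) hvx
  have hMv := hM.card_filter_mem_le_one hF v
  have hFcard : M.edgeSet.ncard = #F := Set.ncard_eq_toFinset_card _
  rw [hFcard, hdeg, hdeg]
  omega

theorem stmt1_general {V : Type*} [Fintype V] (G : SimpleGraph V)
    [DecidableRel G.Adj] (k : ℕ) (hke : Even k)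
    (hedges : G.edgeFinset.card = k) (x : V) (hx : G.degree x = k / 2)
    (hβ : k / 2 ≤ matchingNumber G) :
    ∀ v : V, G.degree v ≤ 3 ∨ G.degree v = k / 2 := by
  classical
  obtain ⟨M, hM, hMcard⟩ := exists_isMatching_ncard_eq_matchingNumber G
  intro v
  rcases eq_or_ne v x with rfl | hvx
  · exact .inr hx
  · have hsum := hM.degree_add_degree_add_ncard_le hvx
    have hk := hke.two_dvd
    omega

theorem stmt1 {V : Type*} [Fintype V] [DecidableEq V] (G : SimpleGraph V)
    [DecidableRel G.Adj] (k : ℕ) (hk2 : 2 ≤ k) (hke : Even k)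
    (hedges : G.edgeFinset.card = k) (x : V) (hx : G.degree x = k / 2)
    (hβ : k / 2 ≤ matchingNumber G) :
    ∀ v : V, G.degree v ≤ 3 ∨ G.degree v = k / 2 :=
  stmt1_general G k hke hedges x hx hβ
end

section
/- Let G be a graph with e(G) = k edges where k ≥ 2 is even, containing a vertex x with deg(x) = k/2 and with matching number β(G) ≥ k/2. Then there exists an edge e of G such that the edge set of G − e can be partitioned into a star K_{1,k/2} centered at x and a matching of k/2 − 1 pairwise non-incident edges. -/
/-!
The edges of `G` split into the star `S` of the `k / 2` edges at `x` and the `k / 2` other edges.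
A maximum matching has at least `k / 2` edges, at most one of them through `x`, so it contains all
but at most one of the other edges. Deleting that edge (or any other edge, if there is none) leaves
`S` and a sub-matching of `k / 2 - 1` edges.
-/

open SimpleGraph

open Finset

namespace Finset

lemma exists_erase_subset_of_card_le {α : Type*} [DecidableEq α] {s t : Finset α}
    (hs : s.Nonempty) (h : #s ≤ #(s ∩ t) + 1) : ∃ a ∈ s, s.erase a ⊆ t := by
  by_cases hst : s ⊆ t
  · obtain ⟨a, ha⟩ := hs
    exact ⟨a, ha, (erase_subset a s).trans hst⟩
  obtain ⟨a, ha, hat⟩ := not_subset.1 hst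
  have hdiff : #(s \ t) ≤ 1 := by
    rw [card_sdiff, inter_comm]
    omega
  refine ⟨a, ha, fun b hb => ?_⟩
  by_contra hbt
  exact ne_of_mem_erase hb <|
    card_le_one.1 hdiff b (mem_sdiff.2 ⟨mem_of_mem_erase hb, hbt⟩) a (mem_sdiff.2 ⟨ha, hat⟩)

lemma card_inter_le_one_of_pairwise {V : Type*} [DecidableEq V] {T S : Finset (Sym2 V)}
    (hT : (T : Set (Sym2 V)).Pairwise fun f g => ∀ v ∈ f, v ∉ g) {x : V}
    (hS : ∀ f ∈ S, x ∈ f) : #(T ∩ S) ≤ 1 := by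
  refine card_le_one.2 fun f hf g hg => ?_
  rw [mem_inter] at hf hg
  by_contra hfg
  exact hT hf.1 hg.1 hfg x (hS f hf.2) (hS g hg.2)

end Finset

namespace SimpleGraph

variable {V : Type*} {G : SimpleGraph V}

lemma Subgraph.IsMatching.pairwise_edgeSet {M : G.Subgraph} (hM : M.IsMatching) :
    M.edgeSet.Pairwise fun f g => ∀ v ∈ f, v ∉ g := by
  intro f hf g hg hfg v hvf hvg
  obtain ⟨a, rfl⟩ := Sym2.mem_iff_exists.1 hvf
  obtain ⟨b, rfl⟩ := Sym2.mem_iff_exists.1 hvg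
  obtain rfl := hM.eq_of_adj_left (Subgraph.mem_edgeSet.1 hf) (Subgraph.mem_edgeSet.1 hg)
  exact hfg rfl

lemma exists_isMatching_ncard_eq_matchingNumber [Finite V] (G : SimpleGraph V) :
    ∃ M : G.Subgraph, M.IsMatching ∧ M.edgeSet.ncard = matchingNumber G := by
  apply Nat.sSup_mem (s := {m | ∃ M : G.Subgraph, M.IsMatching ∧ M.edgeSet.ncard = m})
  · exact ⟨0, ⊥, fun v hv => absurd hv id, by simp⟩
  · refine ⟨Nat.card (Sym2 V), ?_⟩
    rintro m ⟨M, -, rfl⟩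
    exact Set.ncard_le_card _

end SimpleGraph

theorem stmt3 {V : Type*} [Fintype V] [DecidableEq V] (G : SimpleGraph V)
    [DecidableRel G.Adj] (k : ℕ) (hk2 : 2 ≤ k) (hke : Even k)
    (hedges : G.edgeFinset.card = k) (x : V) (hx : G.degree x = k / 2)
    (hβ : k / 2 ≤ matchingNumber G) :
    ∃ e ∈ G.edgeFinset, ∃ S M : Finset (Sym2 V),
      Disjoint S M ∧ S ∪ M = G.edgeFinset.erase e ∧
      S.card = k / 2 ∧ (∀ f ∈ S, x ∈ f) ∧
      M.card = k / 2 - 1 ∧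
      (∀ f ∈ M, ∀ g ∈ M, f ≠ g → ∀ v : V, v ∈ f → v ∉ g) := by
  classical
  obtain ⟨M, hM, hMcard⟩ := G.exists_isMatching_ncard_eq_matchingNumber
  set E := G.edgeFinset
  set S := G.incidenceFinset x
  set T := M.edgeSet.toFinset
  have hxS : ∀ f ∈ S, x ∈ f := fun f hf => ((mem_incidenceFinset _ _ _).1 hf).2
  have hSE : S ⊆ E := fun f hf => mem_edgeFinset.2 ((mem_incidenceFinset _ _ _).1 hf).1
  have hTE : T ⊆ E := fun f hf => mem_edgeFinset.2 (M.edgeSet_subset (Set.mem_toFinset.1 hf))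
  have hS : #S = k / 2 := (card_incidenceFinset_eq_degree G x).trans hx
  have hrest : #(E \ S) = k / 2 := by
    obtain ⟨j, rfl⟩ := hke
    rw [card_sdiff_of_subset hSE, hS, hedges]
    omega
  have hT : k / 2 ≤ #T := by rwa [← Set.ncard_eq_toFinset_card', hMcard]
  have hTmatch : (T : Set (Sym2 V)).Pairwise fun f g => ∀ v ∈ f, v ∉ g := by
    rw [Set.coe_toFinset]
    exact hM.pairwise_edgeSet
  have hTS : #(T ∩ S) ≤ 1 := card_inter_le_one_of_pairwise hTmatch hxS
  have hrestT : #(E \ S) ≤ #((E \ S) ∩ T) + 1 := by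
    have : (E \ S) ∩ T = T \ S := by
      rw [sdiff_inter_right_comm, inter_eq_right.2 hTE]
    rw [this, card_sdiff (t := T), inter_comm S T]
    omega
  obtain ⟨e, he, hsub⟩ := exists_erase_subset_of_card_le (card_pos.1 (by omega)) hrestT
  refine ⟨e, (mem_sdiff.1 he).1, S, (E \ S).erase e, disjoint_sdiff.mono_right (erase_subset _ _),
    ?_, hS, hxS, by rw [card_erase_of_mem he, hrest], ?_⟩
  · calc S ∪ (E \ S).erase e = (S ∪ E \ S).erase e := by
          rw [erase_union_distrib, erase_eq_of_notMem (mem_sdiff.1 he).2]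
      _ = E.erase e := by rw [union_sdiff_of_subset hSE]
  · exact fun f hf g hg => hTmatch (hsub hf) (hsub hg)
end

section
/- For all positive integers s ≤ t and all n, every K_{s,t}-free graph on n vertices has at most (1/2)((t−1)^{1/s} n^{2−1/s} + (s−1)n) edges. -/
/-!
Double count pairs `(v, S)` with `S` an `s`-subset of the neighbourhood of `v`: as no `s`-set has
`t` common neighbours, `∑ᵥ C(dᵥ, s) ≤ (t - 1) C(n, s)`. Together with
`(d + 1 - s)ˢ ≤ s! C(d, s)`, `s! C(n, s) ≤ nˢ` and the power mean inequality this gives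
`(2e - (s - 1)n)ˢ ≤ (t - 1) n^(2s - 1)`; now take `s`-th roots.
-/

open Finset

lemma le_rpow_mul_rpow_of_pow_le_mul_pow {x c N : ℝ} {s m : ℕ} (hs : s ≠ 0) (hx : 0 ≤ x)
    (hc : 0 ≤ c) (hN : 0 ≤ N) (h : x ^ s ≤ c * N ^ m) :
    x ≤ c ^ (1 / s : ℝ) * N ^ (m / s : ℝ) := by
  have hs' : (0 : ℝ) < s := by positivity
  rw [← Real.rpow_natCast, ← Real.le_rpow_inv_iff_of_pos hx (by positivity) hs'] at h
  rwa [Real.mul_rpow hc (by positivity), ← Real.rpow_natCast, ← Real.rpow_mul hN, ← one_div,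
    ← div_eq_mul_one_div] at h

lemma Nat.cast_sub_le_cast_tsub {R : Type*} [Ring R] [PartialOrder R] [IsOrderedRing R]
    (a b : ℕ) : (a : R) - b ≤ ((a - b : ℕ) : R) := by
  rcases le_total b a with h | h
  · rw [Nat.cast_sub h]
  · rw [Nat.sub_eq_zero_of_le h, Nat.cast_zero, sub_nonpos]
    exact Nat.mono_cast h

namespace SimpleGraph

variable {V : Type*} (G : SimpleGraph V)

def HasBiclique (s t : ℕ) : Prop :=
  ∃ (A B : Finset V), Disjoint A B ∧ A.card = s ∧ B.card = t ∧ ∀ a ∈ A, ∀ b ∈ B, G.Adj a b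

variable [Fintype V] [DecidableRel G.Adj] {s t : ℕ}

-- The truncated subtraction `d + 1 - s` keeps the terms nonnegative, as the power mean needs.
lemma two_mul_card_edgeFinset_sub_le_sum (s : ℕ) :
    2 * (#G.edgeFinset : ℝ) - ((s : ℝ) - 1) * Fintype.card V ≤
      ∑ v, ((G.degree v + 1 - s : ℕ) : ℝ) := by
  have hdeg : ∑ v, (G.degree v : ℝ) = 2 * #G.edgeFinset := by
    exact_mod_cast G.sum_degrees_eq_twice_card_edges
  calc 2 * (#G.edgeFinset : ℝ) - ((s : ℝ) - 1) * Fintype.card V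
      = ∑ v, ((G.degree v : ℝ) + 1 - s) := by
        rw [sum_sub_distrib, sum_add_distrib, hdeg]
        simp only [sum_const, card_univ, nsmul_eq_mul, mul_one]
        ring
    _ ≤ ∑ v, ((G.degree v + 1 - s : ℕ) : ℝ) :=
        sum_le_sum fun v _ => by simpa using Nat.cast_sub_le_cast_tsub (R := ℝ) (G.degree v + 1) s

variable [DecidableEq V]

lemma card_filter_subset_neighborFinset_lt (h : ¬ G.HasBiclique s t) {S : Finset V}
    (hS : #S = s) : #{v | S ⊆ G.neighborFinset v} < t := by
  by_contra! hle
  obtain ⟨B, hBsub, hBcard⟩ := exists_subset_card_eq hle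
  have hB : ∀ b ∈ B, ∀ a ∈ S, G.Adj b a := fun b hb a ha =>
    (G.mem_neighborFinset _ _).1 ((mem_filter.1 (hBsub hb)).2 ha)
  have hdisj : Disjoint S B := Finset.disjoint_left.2 fun v hvS hvB => G.irrefl (hB v hvB v hvS)
  exact h ⟨S, B, hdisj, hS, hBcard, fun a ha b hb => (hB b hb a ha).symm⟩

lemma sum_choose_degree_eq (s : ℕ) :
    ∑ v, (G.degree v).choose s = ∑ S ∈ powersetCard s univ, #{v | S ⊆ G.neighborFinset v} := by
  refine Eq.trans (sum_congr rfl fun v _ => ?_)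
    (sum_card_bipartiteAbove_eq_sum_card_bipartiteBelow (fun v S => S ⊆ G.neighborFinset v))
  rw [← card_neighborFinset_eq_degree, ← card_powersetCard]
  congr 1
  ext S
  simp [bipartiteAbove, mem_powersetCard, and_comm]

lemma sum_choose_degree_le (h : ¬ G.HasBiclique s t) :
    ∑ v, (G.degree v).choose s ≤ (t - 1) * (Fintype.card V).choose s := by
  rw [sum_choose_degree_eq]
  calc ∑ S ∈ powersetCard s univ, #{v | S ⊆ G.neighborFinset v}
      ≤ ∑ _S ∈ powersetCard s (univ : Finset V), (t - 1) :=
        sum_le_sum fun S hS => Nat.le_sub_one_of_lt <|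
          G.card_filter_subset_neighborFinset_lt h (mem_powersetCard_univ.1 hS)
    _ = (t - 1) * (Fintype.card V).choose s := by
        rw [sum_const, card_powersetCard, card_univ, smul_eq_mul, mul_comm]

lemma sum_pow_degree_tsub_le (ht : 1 ≤ t) (h : ¬ G.HasBiclique s t) :
    ∑ v, ((G.degree v + 1 - s : ℕ) : ℝ) ^ s ≤ ((t : ℝ) - 1) * (Fintype.card V : ℝ) ^ s := by
  have hfac : (0 : ℝ) < s.factorial := by positivity
  calc ∑ v, ((G.degree v + 1 - s : ℕ) : ℝ) ^ s
      ≤ ∑ v, (s.factorial : ℝ) * (G.degree v).choose s :=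
        sum_le_sum fun v _ => (div_le_iff₀' hfac).1 (Nat.pow_le_choose s _)
    _ = s.factorial * ((∑ v, (G.degree v).choose s : ℕ) : ℝ) := by rw [Nat.cast_sum, mul_sum]
    _ ≤ s.factorial * (((t : ℝ) - 1) * (Fintype.card V).choose s) := by
        rw [← Nat.cast_pred ht]
        gcongr
        exact_mod_cast G.sum_choose_degree_le h
    _ ≤ ((t : ℝ) - 1) * (Fintype.card V : ℝ) ^ s := by
        rw [mul_left_comm]
        gcongr
        · exact sub_nonneg.2 (by exact_mod_cast ht)
        · exact (le_div_iff₀' hfac).1 (Nat.choose_le_pow_div s _)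

lemma pow_two_mul_card_edgeFinset_sub_le (hs : 1 ≤ s) (ht : 1 ≤ t) (h : ¬ G.HasBiclique s t)
    (hpos : 0 ≤ 2 * (#G.edgeFinset : ℝ) - ((s : ℝ) - 1) * Fintype.card V) :
    (2 * (#G.edgeFinset : ℝ) - ((s : ℝ) - 1) * Fintype.card V) ^ s ≤
      ((t : ℝ) - 1) * (Fintype.card V : ℝ) ^ (2 * s - 1) := by
  obtain ⟨k, rfl⟩ : ∃ k, s = k + 1 := ⟨s - 1, by omega⟩
  calc (2 * (#G.edgeFinset : ℝ) - ((↑(k + 1) : ℝ) - 1) * Fintype.card V) ^ (k + 1)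
      ≤ (∑ v, ((G.degree v + 1 - (k + 1) : ℕ) : ℝ)) ^ (k + 1) :=
        pow_le_pow_left₀ hpos (G.two_mul_card_edgeFinset_sub_le_sum _) _
    _ ≤ (Fintype.card V : ℝ) ^ k * ∑ v, ((G.degree v + 1 - (k + 1) : ℕ) : ℝ) ^ (k + 1) := by
        simpa using pow_sum_le_card_mul_sum_pow (s := univ) (fun v _ => Nat.cast_nonneg _) k
    _ ≤ (Fintype.card V : ℝ) ^ k * (((t : ℝ) - 1) * (Fintype.card V : ℝ) ^ (k + 1)) := by
        gcongr
        exact G.sum_pow_degree_tsub_le ht h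
    _ = ((t : ℝ) - 1) * (Fintype.card V : ℝ) ^ (2 * (k + 1) - 1) := by
        rw [show 2 * (k + 1) - 1 = k + (k + 1) by omega, pow_add]
        ring

end SimpleGraph

theorem stmt11_general {V : Type*} [Fintype V] (G : SimpleGraph V)
    [DecidableRel G.Adj] (s t n : ℕ) (hs : 1 ≤ s) (hst : s ≤ t)
    (hcard : Fintype.card V = n)
    (hfree : ¬ ∃ (A B : Finset V), Disjoint A B ∧ A.card = s ∧ B.card = t ∧
      ∀ a ∈ A, ∀ b ∈ B, G.Adj a b) :
    (G.edgeFinset.card : ℝ) ≤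
      (1 / 2) * (((t : ℝ) - 1) ^ ((1 : ℝ) / (s : ℝ)) * (n : ℝ) ^ ((2 : ℝ) - 1 / (s : ℝ))
        + ((s : ℝ) - 1) * (n : ℝ)) := by
  classical
  subst hcard
  have ht : 1 ≤ t := hs.trans hst
  have ht' : (0 : ℝ) ≤ t - 1 := sub_nonneg.2 (by exact_mod_cast ht)
  set x := 2 * (#G.edgeFinset : ℝ) - ((s : ℝ) - 1) * Fintype.card V
  suffices x ≤ ((t : ℝ) - 1) ^ ((1 : ℝ) / s) * (Fintype.card V : ℝ) ^ ((2 : ℝ) - 1 / s) by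
    linarith
  rcases le_total x 0 with hneg | hpos
  · exact hneg.trans (by positivity)
  convert le_rpow_mul_rpow_of_pow_le_mul_pow (by omega) hpos ht' (Nat.cast_nonneg _)
    (G.pow_two_mul_card_edgeFinset_sub_le hs ht hfree hpos) using 3
  rw [Nat.cast_sub (by omega)]
  push_cast
  field_simp

theorem stmt11 {V : Type*} [Fintype V] [DecidableEq V] (G : SimpleGraph V)
    [DecidableRel G.Adj] (s t n : ℕ) (hs : 1 ≤ s) (hst : s ≤ t)
    (hcard : Fintype.card V = n)
    (hfree : ¬ ∃ (A B : Finset V), Disjoint A B ∧ A.card = s ∧ B.card = t ∧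
      ∀ a ∈ A, ∀ b ∈ B, G.Adj a b) :
    (G.edgeFinset.card : ℝ) ≤
      (1 / 2) * (((t : ℝ) - 1) ^ ((1 : ℝ) / (s : ℝ)) * (n : ℝ) ^ ((2 : ℝ) - 1 / (s : ℝ))
        + ((s : ℝ) - 1) * (n : ℝ)) :=
  stmt11_general G s t n hs hst hcard hfree
end

section
/- For every connected graph H and integer q ≥ 1, ex(n, qH) ≤ ex(n, H) + (q−1)·|V(H)|·n, where qH denotes q vertex-disjoint copies of H. In particular, ex(n, qH) = ex(n,H) + O(n). -/
open SimpleGraph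

/-- `G` contains a copy of `H` as a subgraph. -/
def HasCopy {γ β : Type*} (G : SimpleGraph γ) (H : SimpleGraph β) : Prop :=
  ∃ f : β → γ, Function.Injective f ∧ ∀ a b : β, H.Adj a b → G.Adj (f a) (f b)

/-- The Turán number `ex(n, H)`: the maximum number of edges of an `H`-free graph
on `n` vertices. -/
noncomputable def exNum {β : Type*} (n : ℕ) (H : SimpleGraph β) : ℕ :=
  sSup {m | ∃ G : SimpleGraph (Fin n), ¬ HasCopy G H ∧ G.edgeSet.ncard = m}

/-- `qH`: the disjoint union of `q` copies of `H`. -/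
def nCopies {β : Type*} (H : SimpleGraph β) (q : ℕ) : SimpleGraph (β × Fin q) where
  Adj x y := x.2 = y.2 ∧ H.Adj x.1 y.1
  symm := ⟨fun x y h => ⟨h.1.symm, h.2.symm⟩⟩
  loopless := ⟨fun x h => H.irrefl h.2⟩


/-! Gorgol's argument. A graph with no copy of `(q+1)H` either has no copy of `H`, or contains one,
and removing the at most `|V(H)|·n` edges meeting it leaves a graph with no copy of `qH`: a copy
there avoids the removed vertices, since a connected `H` on at least two vertices has no isolated
vertices. When `H` is a single vertex, `qH` is `q` isolated vertices and lies in every graph on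
`n ≥ q` vertices. -/

open Function

namespace SimpleGraph

variable {V : Type*}

/-- Unlike `G.induce Sᶜ`, this stays a graph on the same vertex type. -/
def deleteEdgesMeeting (G : SimpleGraph V) (S : Set V) : SimpleGraph V where
  Adj a b := G.Adj a b ∧ a ∉ S ∧ b ∉ S
  symm := ⟨fun _ _ h => ⟨h.1.symm, h.2.2, h.2.1⟩⟩
  loopless := ⟨fun a h => G.loopless.irrefl a h.1⟩

@[simp]
lemma deleteEdgesMeeting_adj {G : SimpleGraph V} {S : Set V} {a b : V} :
    (G.deleteEdgesMeeting S).Adj a b ↔ G.Adj a b ∧ a ∉ S ∧ b ∉ S :=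
  Iff.rfl

lemma ncard_edgeSet_le_deleteEdgesMeeting_add [Fintype V] (G : SimpleGraph V) (S : Set V) :
    G.edgeSet.ncard ≤
      (G.deleteEdgesMeeting S).edgeSet.ncard + S.ncard * Fintype.card V := by
  have hsub :
      G.edgeSet ⊆ (G.deleteEdgesMeeting S).edgeSet ∪ uncurry Sym2.mk '' (S ×ˢ Set.univ) := by
    intro e he
    induction e with
    | _ a b =>
      by_cases ha : a ∈ S
      · exact Or.inr ⟨(a, b), ⟨ha, trivial⟩, rfl⟩
      by_cases hb : b ∈ S
      · exact Or.inr ⟨(b, a), ⟨hb, trivial⟩, Sym2.eq_swap⟩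
      exact Or.inl (deleteEdgesMeeting_adj.2 ⟨he, ha, hb⟩)
  have hmeeting : (uncurry Sym2.mk '' (S ×ˢ Set.univ)).ncard ≤ S.ncard * Fintype.card V :=
    calc _ ≤ (S ×ˢ (Set.univ : Set V)).ncard := Set.ncard_image_le (Set.toFinite _)
      _ = S.ncard * Fintype.card V := by
        rw [Set.ncard_prod, Set.ncard_univ, Nat.card_eq_fintype_card]
  calc G.edgeSet.ncard ≤ _ := Set.ncard_le_ncard hsub (Set.toFinite _)
    _ ≤ _ := Set.ncard_union_le _ _
    _ ≤ _ := by gcongr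

lemma ncard_edgeSet_le_card_mul_card [Fintype V] (G : SimpleGraph V) :
    G.edgeSet.ncard ≤ Fintype.card V * Fintype.card V := by
  have hempty : (G.deleteEdgesMeeting Set.univ).edgeSet = ∅ :=
    Set.eq_empty_of_forall_notMem fun e => by
      induction e with
      | _ a b => exact fun h => (deleteEdgesMeeting_adj.1 h).2.1 trivial
  simpa [hempty, Set.ncard_univ, Nat.card_eq_fintype_card] using
    G.ncard_edgeSet_le_deleteEdgesMeeting_add Set.univ

lemma Connected.exists_adj_of_nontrivial [Nontrivial V] {G : SimpleGraph V} (hG : G.Connected)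
    (x : V) : ∃ y, G.Adj x y := by
  obtain ⟨z, hz⟩ := exists_ne x
  obtain ⟨w⟩ := hG x z
  cases w with
  | nil => exact absurd rfl hz
  | cons h _ => exact ⟨_, h⟩

end SimpleGraph

section Copies

variable {γ β : Type*} {G : SimpleGraph γ} {H : SimpleGraph β}

lemma HasCopy.nCopies_one (h : HasCopy G H) : HasCopy G (nCopies H 1) := by
  obtain ⟨f, hf, hadj⟩ := h
  exact ⟨fun p => f p.1, fun p p' e => Prod.ext (hf e) (Subsingleton.elim _ _),
    fun a b hab => hadj _ _ hab.2⟩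

lemma hasCopy_of_embedding_of_forall_not_adj (e : β ↪ γ) (hH : ∀ a b, ¬ H.Adj a b) :
    HasCopy G H :=
  ⟨e, e.injective, fun a b hab => absurd hab (hH a b)⟩

/-- The copy of `H` becomes the last summand of `(q + 1)H`. -/
lemma hasCopy_nCopies_succ {q : ℕ} {f : β → γ} {g : β × Fin q → γ}
    (hf : Injective f) (hfadj : ∀ a b, H.Adj a b → G.Adj (f a) (f b))
    (hg : Injective g) (hgadj : ∀ a b, (nCopies H q).Adj a b → G.Adj (g a) (g b))
    (hfg : ∀ x p, f x ≠ g p) : HasCopy G (nCopies H (q + 1)) := by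
  refine ⟨fun p => Fin.lastCases (f p.1) (fun i => g (p.1, i)) p.2, ?_, ?_⟩
  · rintro ⟨x, i⟩ ⟨y, j⟩ hxy
    cases i using Fin.lastCases <;> cases j using Fin.lastCases <;>
      simp only [Fin.lastCases_last, Fin.lastCases_castSucc] at hxy
    · rw [hf hxy]
    · exact absurd hxy (hfg _ _)
    · exact absurd hxy.symm (hfg _ _)
    · cases hg hxy; rfl
  · rintro ⟨x, i⟩ ⟨y, j⟩ ⟨rfl : i = j, hxy⟩
    cases i using Fin.lastCases
    · simpa using hfadj x y hxy
    · simpa using hgadj (x, _) (y, _) ⟨rfl, hxy⟩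

/-- The copy of `qH` avoids `Set.range f` because `H` has no isolated vertices. -/
lemma hasCopy_nCopies_succ_of_deleteEdgesMeeting {q : ℕ} (hH : ∀ x, ∃ y, H.Adj x y)
    {f : β → γ} (hf : Injective f) (hfadj : ∀ a b, H.Adj a b → G.Adj (f a) (f b))
    (h : HasCopy (G.deleteEdgesMeeting (Set.range f)) (nCopies H q)) :
    HasCopy G (nCopies H (q + 1)) := by
  obtain ⟨g, hg, hgadj⟩ := h
  refine hasCopy_nCopies_succ hf hfadj hg
    (fun a b hab => (deleteEdgesMeeting_adj.1 (hgadj a b hab)).1) ?_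
  rintro x ⟨y, i⟩ hxy
  obtain ⟨z, hz⟩ := hH y
  exact (deleteEdgesMeeting_adj.1 (hgadj (y, i) (z, i) ⟨rfl, hz⟩)).2.1 ⟨x, hxy⟩

end Copies

section Extremal

variable {β : Type*} {n : ℕ} {H : SimpleGraph β}

lemma le_exNum (G : SimpleGraph (Fin n)) (h : ¬ HasCopy G H) :
    G.edgeSet.ncard ≤ exNum n H := by
  refine le_csSup ⟨n * n, ?_⟩ ⟨G, h, rfl⟩
  rintro m ⟨G', -, rfl⟩
  simpa using G'.ncard_edgeSet_le_card_mul_card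

lemma exNum_le {k : ℕ}
    (h : ∀ G : SimpleGraph (Fin n), ¬ HasCopy G H → G.edgeSet.ncard ≤ k) :
    exNum n H ≤ k :=
  csSup_le' (by rintro m ⟨G, hG, rfl⟩; exact h G hG)

lemma exNum_nCopies_le_of_subsingleton [Fintype β] [Subsingleton β] (q : ℕ) :
    exNum n (nCopies H q) ≤ (q - 1) * n := by
  refine exNum_le fun G hG => ?_
  have hnq : n < q := by
    by_contra! hqn
    have hcard : Fintype.card (β × Fin q) ≤ Fintype.card (Fin n) := by
      simpa using Nat.mul_le_mul (Fintype.card_le_one_iff_subsingleton.2 ‹_›) hqn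
    obtain ⟨e⟩ := Function.Embedding.nonempty_of_card_le hcard
    exact hG (hasCopy_of_embedding_of_forall_not_adj e
      fun a b hab => H.irrefl (Subsingleton.elim a.1 b.1 ▸ hab.2))
  calc G.edgeSet.ncard ≤ n * n := by simpa using G.ncard_edgeSet_le_card_mul_card
    _ ≤ (q - 1) * n := by gcongr; omega

lemma exNum_nCopies_succ_le [Fintype β] (hH : ∀ x, ∃ y, H.Adj x y) (q : ℕ) :
    exNum n (nCopies H (q + 1)) ≤ exNum n H + q * Fintype.card β * n := by
  refine exNum_le fun G hG => ?_
  induction q generalizing G with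
  | zero => simpa using le_exNum G fun h => hG h.nCopies_one
  | succ q ih =>
    by_cases hcopy : HasCopy G H
    swap
    · exact (le_exNum G hcopy).trans (Nat.le_add_right _ _)
    obtain ⟨f, hf, hfadj⟩ := hcopy
    have hrest := ih (G.deleteEdgesMeeting (Set.range f))
      fun h => hG (hasCopy_nCopies_succ_of_deleteEdgesMeeting hH hf hfadj h)
    have hrange : (Set.range f).ncard = Fintype.card β := by
      rw [Set.ncard_range_of_injective hf, Nat.card_eq_fintype_card]
    calc G.edgeSet.ncard
        ≤ (G.deleteEdgesMeeting (Set.range f)).edgeSet.ncard + (Set.range f).ncard * n := by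
          simpa using G.ncard_edgeSet_le_deleteEdgesMeeting_add (Set.range f)
      _ ≤ exNum n H + q * Fintype.card β * n + Fintype.card β * n := by rw [hrange]; gcongr
      _ = exNum n H + (q + 1) * Fintype.card β * n := by ring

end Extremal

theorem stmt19 {β : Type*} [Fintype β] (H : SimpleGraph β) (hconn : H.Connected)
    (q : ℕ) (hq : 1 ≤ q) (n : ℕ) :
    exNum n (nCopies H q) ≤ exNum n H + (q - 1) * Fintype.card β * n := by
  obtain ⟨q, rfl⟩ := Nat.exists_eq_add_of_le' hq
  rcases subsingleton_or_nontrivial β with hβ | hβ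
  · have : 1 ≤ Fintype.card β := Fintype.card_pos_iff.2 hconn.nonempty
    calc exNum n (nCopies H (q + 1)) ≤ q * n := exNum_nCopies_le_of_subsingleton (q + 1)
      _ ≤ q * Fintype.card β * n := by gcongr; exact Nat.le_mul_of_pos_right q this
      _ ≤ _ := Nat.le_add_left _ _
  · simpa using exNum_nCopies_succ_le hconn.exists_adj_of_nontrivial q (n := n)
end
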